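/- arXiv:2007.15150 — 8 statements merged into one kernel-verified Lean document; each statement's English description precedes it below -/
import Mathlib

section
/- Let p > 1 be real, let ζ ∈ ℂ with ζ ≠ 0, and let Φ ∈ ℂ with Φ ≠ 0. Then there exists a unique ξ ∈ ℂ with |ξ| < |ζ| such that ((|ζ|²+|ξ|²)/(|ζ|²−|ξ|²))^(p−1) · ζ · conj(ξ) = Φ. -/
/-!
Taking norms, a solution forces `r = ‖ξ‖` to solve `K(r)^(p-1) · r = ‖Φ‖ / ‖ζ‖`, where
`K(r) = (‖ζ‖² + r²)/(‖ζ‖² - r²)`. On `[0, ‖ζ‖)` the left side is continuous, strictly increasing,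
vanishes at `0` and tends to `∞` at `‖ζ‖`, so this `r` exists and is unique; once `r` is known the
equation is linear in `conj ξ`, which fixes `ξ`.
-/

open Set Filter Topology ComplexConjugate

/-- The distortion `K` of an `ℝ`-linear map `h` of `ℂ` with `|h_w| = R` and `|h_w̄| = r`. -/
noncomputable def distortion (R r : ℝ) : ℝ := (R ^ 2 + r ^ 2) / (R ^ 2 - r ^ 2)

namespace distortion

variable {R r : ℝ}

lemma pos (hr : r ∈ Ico 0 R) : 0 < distortion R r := by
  have hR : 0 < R := hr.1.trans_lt hr.2
  exact div_pos (by positivity) (by nlinarith [hr.1, hr.2])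

lemma strictMonoOn : StrictMonoOn (distortion R) (Ico 0 R) := by
  intro a ⟨ha0, _⟩ b ⟨_, hbR⟩ hab
  have hsq : a ^ 2 < b ^ 2 := pow_lt_pow_left₀ hab ha0 two_ne_zero
  have hb : 0 < R ^ 2 - b ^ 2 := by nlinarith
  unfold distortion
  rw [div_lt_div_iff₀ (by linarith) hb]
  nlinarith [sq_nonneg R]

lemma continuousOn : ContinuousOn (distortion R) (Ico 0 R) :=
  continuousOn_const.add (continuousOn_pow 2) |>.div (continuousOn_const.sub (continuousOn_pow 2))
    fun r ⟨hr0, hrR⟩ => by nlinarith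

lemma tendsto_atTop (hR : 0 < R) : Tendsto (distortion R) (𝓝[<] R) atTop := by
  have hnum : Tendsto (fun r => R ^ 2 + r ^ 2) (𝓝[<] R) (𝓝 (R ^ 2 + R ^ 2)) :=
    (continuous_const.add (continuous_pow 2)).continuousWithinAt.tendsto
  have hden : Tendsto (fun r => R ^ 2 - r ^ 2) (𝓝[<] R) (𝓝[>] 0) := by
    refine tendsto_nhdsWithin_of_tendsto_nhds_of_eventually_within _ ?_ ?_
    · exact ((by fun_prop : Continuous fun r : ℝ => R ^ 2 - r ^ 2).tendsto' R 0
        (sub_self _)).mono_left nhdsWithin_le_nhds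
    · filter_upwards [Ioo_mem_nhdsLT (neg_lt_self hR)] with r ⟨h₁, h₂⟩
      exact sub_pos.2 (sq_lt_sq' h₁ h₂)
  exact hnum.pos_mul_atTop (by positivity) (tendsto_inv_nhdsGT_zero.comp hden)

end distortion

section

variable {q R : ℝ}

lemma strictMonoOn_distortion_rpow_mul (hq : 0 < q) :
    StrictMonoOn (fun r => distortion R r ^ q * r) (Ico 0 R) := by
  intro a ha b hb hab
  have hKa := distortion.pos ha
  exact mul_lt_mul'' (Real.rpow_lt_rpow hKa.le (distortion.strictMonoOn ha hb hab) hq) hab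
    (Real.rpow_pos_of_pos hKa q).le ha.1

lemma existsUnique_distortion_rpow_mul_eq (hq : 0 < q) (hR : 0 < R) {c : ℝ} (hc : 0 ≤ c) :
    ∃! r ∈ Ico 0 R, distortion R r ^ q * r = c := by
  set g := fun r => distortion R r ^ q * r
  have hg : Tendsto g (𝓝[<] R) atTop :=
    ((tendsto_rpow_atTop hq).comp (distortion.tendsto_atTop hR)).atTop_mul_pos hR
      continuousWithinAt_id.tendsto
  obtain ⟨b, hcb, hb⟩ :=
    ((hg.eventually_ge_atTop c).and (Ioo_mem_nhdsLT hR)).exists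
  have hcont : ContinuousOn g (Ico 0 R) :=
    (distortion.continuousOn.rpow_const fun _ _ => Or.inr hq.le).mul continuousOn_id
  obtain ⟨r, hr, hgr⟩ := hcont.surjOn_Icc (left_mem_Ico.2 hR) (Ioo_subset_Ico_self hb)
    ⟨by simpa [g] using hc, hcb⟩
  exact ⟨r, ⟨hr, hgr⟩, fun s ⟨hs, hgs⟩ => (strictMonoOn_distortion_rpow_mul hq).injOn hs hr
    (hgs.trans hgr.symm)⟩

end

lemma existsUnique_ofReal_mul_mul_conj_eq {ζ Φ : ℂ} (hζ : ζ ≠ 0) {R : ℝ} {K : ℝ → ℝ}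
    (hK : ∀ r ∈ Ico 0 R, 0 < K r) (h : ∃! r ∈ Ico 0 R, K r * r = ‖Φ‖ / ‖ζ‖) :
    ∃! ξ : ℂ, ‖ξ‖ < R ∧ (K ‖ξ‖ : ℂ) * ζ * conj ξ = Φ := by
  obtain ⟨r, ⟨hr, hKr⟩, hr_unique⟩ := h
  have hζ' : 0 < ‖ζ‖ := norm_pos_iff.2 hζ
  have hKr0 : (K r : ℂ) ≠ 0 := Complex.ofReal_ne_zero.2 (hK r hr).ne'
  have hsol : ∀ ξ : ℂ, ‖ξ‖ = r → ((K ‖ξ‖ : ℂ) * ζ * conj ξ = Φ ↔ conj ξ = Φ / (K r * ζ)) := by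
    rintro ξ rfl
    rw [eq_div_iff (mul_ne_zero hKr0 hζ), mul_comm]
  refine ⟨conj (Φ / (K r * ζ)), ?_, fun ξ ⟨hξR, hξ⟩ => ?_⟩
  · have hnorm : ‖conj (Φ / (K r * ζ))‖ = r := by
      rw [Complex.norm_conj, norm_div, norm_mul, Complex.norm_real,
        Real.norm_of_nonneg (hK r hr).le, div_eq_iff (by positivity [hK r hr]),
        ← (eq_div_iff hζ'.ne').1 hKr]
      ring
    exact ⟨by rw [hnorm]; exact hr.2, (hsol _ hnorm).2 (Complex.conj_conj _)⟩
  · have hξr : ‖ξ‖ = r := by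
      refine hr_unique _ ⟨⟨norm_nonneg ξ, hξR⟩, ?_⟩
      have hξ_norm := congrArg norm hξ
      rw [norm_mul, norm_mul, Complex.norm_real, Complex.norm_conj,
        Real.norm_of_nonneg (hK _ ⟨norm_nonneg ξ, hξR⟩).le] at hξ_norm
      rw [eq_div_iff hζ'.ne', ← hξ_norm]
      ring
    rw [← (hsol ξ hξr).1 hξ, Complex.conj_conj]

theorem existsUnique_beltrami_operator_general (p : ℝ) (hp : 1 < p) (ζ Φ : ℂ)
    (hζ : ζ ≠ 0) :
    ∃! ξ : ℂ, ‖ξ‖ < ‖ζ‖ ∧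
      ((((‖ζ‖ ^ 2 + ‖ξ‖ ^ 2) /
          (‖ζ‖ ^ 2 - ‖ξ‖ ^ 2)) ^ (p - 1) : ℝ) : ℂ) *
        ζ * (starRingEnd ℂ) ξ = Φ :=
  existsUnique_ofReal_mul_mul_conj_eq (K := fun r => distortion ‖ζ‖ r ^ (p - 1)) hζ
    (fun _ hr => Real.rpow_pos_of_pos (distortion.pos hr) _)
    (existsUnique_distortion_rpow_mul_eq (by linarith) (norm_pos_iff.2 hζ) (by positivity))

/-- For real `p > 1`, `ζ ≠ 0` and `Φ ≠ 0` complex, there is a unique `ξ ∈ ℂ` with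
`|ξ| < |ζ|` such that `((|ζ|² + |ξ|²)/(|ζ|² − |ξ|²))^(p−1) · ζ · conj ξ = Φ`
(the real power is `Real.rpow`). -/
theorem existsUnique_beltrami_operator (p : ℝ) (hp : 1 < p) (ζ Φ : ℂ)
    (hζ : ζ ≠ 0) (hΦ : Φ ≠ 0) :
    ∃! ξ : ℂ, ‖ξ‖ < ‖ζ‖ ∧
      ((((‖ζ‖ ^ 2 + ‖ξ‖ ^ 2) /
          (‖ζ‖ ^ 2 - ‖ξ‖ ^ 2)) ^ (p - 1) : ℝ) : ℂ) *
        ζ * (starRingEnd ℂ) ξ = Φ :=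
  existsUnique_beltrami_operator_general p hp ζ Φ hζ
end

section
/- Let p > 1 and k > 0 be real, and let V : (0,∞) → ℝ satisfy 0 < V(x) < 1 and ((1+V(x)²)/(1−V(x)²))^(p−1) · x² · V(x) = k for all x > 0. Then V is strictly decreasing on (0,∞). -/
/-!
Rearranged, the level-curve equation says `W (V x) * x ^ 2 = k` with
`W v = ((1 + v²)/(1 − v²))^(p−1) · v`. Since `W > 0` on `(0, 1)`, the product being constant forces
`W ∘ V` to be strictly decreasing; and `W` is strictly increasing on `(0, 1)` for `p ≥ 1`, as a
product of the nondecreasing positive factor `((1 + v²)/(1 − v²))^(p−1)` and `v`.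
-/

open Set

noncomputable def levelWeight (p v : ℝ) : ℝ :=
  ((1 + v ^ 2) / (1 - v ^ 2)) ^ (p - 1) * v

lemma one_add_sq_div_one_sub_sq_pos {v : ℝ} (hv : v ∈ Ioo (-1) 1) :
    0 < (1 + v ^ 2) / (1 - v ^ 2) := by
  have : 0 < 1 - v ^ 2 := by nlinarith [hv.1, hv.2]
  positivity

lemma strictMonoOn_one_add_sq_div_one_sub_sq :
    StrictMonoOn (fun v : ℝ => (1 + v ^ 2) / (1 - v ^ 2)) (Ico 0 1) := by
  intro u hu v hv huv
  have hu' : 0 < 1 - u ^ 2 := by nlinarith [hu.1, hu.2]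
  have hv' : 0 < 1 - v ^ 2 := by nlinarith [hv.1, hv.2]
  rw [div_lt_div_iff₀ hu' hv']
  nlinarith [hu.1]

lemma levelWeight_pos (p : ℝ) {v : ℝ} (hv : v ∈ Ioo 0 1) : 0 < levelWeight p v :=
  mul_pos (Real.rpow_pos_of_pos (one_add_sq_div_one_sub_sq_pos ⟨by linarith [hv.1], hv.2⟩) _) hv.1

lemma strictMonoOn_levelWeight {p : ℝ} (hp : 1 ≤ p) : StrictMonoOn (levelWeight p) (Ioo 0 1) := by
  intro u hu v hv huv
  have hbase_le : ((1 + u ^ 2) / (1 - u ^ 2)) ^ (p - 1) ≤ ((1 + v ^ 2) / (1 - v ^ 2)) ^ (p - 1) :=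
    Real.rpow_le_rpow (one_add_sq_div_one_sub_sq_pos ⟨by linarith [hu.1], hu.2⟩).le
      (strictMonoOn_one_add_sq_div_one_sub_sq ⟨hu.1.le, hu.2⟩ ⟨hv.1.le, hv.2⟩ huv).le
      (by linarith)
  have hbase_pos : 0 < ((1 + v ^ 2) / (1 - v ^ 2)) ^ (p - 1) :=
    Real.rpow_pos_of_pos (one_add_sq_div_one_sub_sq_pos ⟨by linarith [hv.1], hv.2⟩) _
  exact mul_lt_mul' hbase_le huv hu.1.le hbase_pos

lemma strictAntiOn_of_mul_sq_eq {g : ℝ → ℝ} {k : ℝ} (hg : ∀ x > (0 : ℝ), 0 < g x)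
    (h : ∀ x > (0 : ℝ), g x * x ^ 2 = k) : StrictAntiOn g (Ioi 0) := by
  intro a ha b hb hab
  have hsq : a ^ 2 < b ^ 2 := by gcongr; exact le_of_lt ha
  have hb2 : 0 < b ^ 2 := pow_pos hb 2
  rw [← mul_lt_mul_iff_of_pos_right hb2]
  calc g b * b ^ 2 = g a * a ^ 2 := by rw [h b hb, h a ha]
    _ < g a * b ^ 2 := mul_lt_mul_of_pos_left hsq (hg a ha)

theorem strictAntiOn_V_general (p k : ℝ) (hp : 1 < p) (V : ℝ → ℝ)
    (hV : ∀ x > (0 : ℝ), 0 < V x ∧ V x < 1)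
    (heq : ∀ x > (0 : ℝ), ((1 + V x ^ 2) / (1 - V x ^ 2)) ^ (p - 1) * x ^ 2 * V x = k) :
    StrictAntiOn V (Set.Ioi 0) := by
  have hW : StrictAntiOn (fun x => levelWeight p (V x)) (Ioi 0) :=
    strictAntiOn_of_mul_sq_eq (fun x hx => levelWeight_pos p (hV x hx))
      (fun x hx => by rw [levelWeight, mul_right_comm]; exact heq x hx)
  intro a ha b hb hab
  exact ((strictMonoOn_levelWeight hp.le).lt_iff_lt (hV b hb) (hV a ha)).mp (hW ha hb hab)

/-- For real `p > 1`, `k > 0`, if `V` satisfies `0 < V x < 1` and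
`((1 + V x²)/(1 − V x²))^(p−1) · x² · V x = k` for all `x > 0` (real power `Real.rpow`),
then `V` is strictly decreasing on `(0, ∞)`. -/
theorem strictAntiOn_V (p k : ℝ) (hp : 1 < p) (hk : 0 < k) (V : ℝ → ℝ)
    (hV : ∀ x > (0 : ℝ), 0 < V x ∧ V x < 1)
    (heq : ∀ x > (0 : ℝ), ((1 + V x ^ 2) / (1 - V x ^ 2)) ^ (p - 1) * x ^ 2 * V x = k) :
    StrictAntiOn V (Set.Ioi 0) :=
  strictAntiOn_V_general p k hp V hV heq
end

section
/- Let p > 1 and k > 0 be real, and let W : (0,∞) → ℝ satisfy 0 < W(x) < x² and ((x⁴+W(x)²)/(x⁴−W(x)²))^(p−1) · W(x) = k for all x > 0. Then W is strictly increasing on (0,∞). -/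
/-- For real `p > 1`, `k > 0`, if `W` satisfies `0 < W x < x²` and
`((x⁴ + W x²)/(x⁴ − W x²))^(p−1) · W x = k` for all `x > 0` (real power `Real.rpow`),
then `W` is strictly increasing on `(0, ∞)`. -/
theorem strictMonoOn_W (p k : ℝ) (hp : 1 < p) (hk : 0 < k) (W : ℝ → ℝ)
    (hW : ∀ x > (0 : ℝ), 0 < W x ∧ W x < x ^ 2)
    (heq : ∀ x > (0 : ℝ), ((x ^ 4 + W x ^ 2) / (x ^ 4 - W x ^ 2)) ^ (p - 1) * W x = k) :
    StrictMonoOn W (Set.Ioi 0) := by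
  intro x1 hx1 x2 hx2 hlt
  simp only [Set.mem_Ioi] at hx1 hx2
  by_contra hcon
  push_neg at hcon
  obtain ⟨hW1pos, hW1lt⟩ := hW x1 hx1
  obtain ⟨hW2pos, hW2lt⟩ := hW x2 hx2
  have hw2lt1 : W x2 < x1 ^ 2 := lt_of_le_of_lt hcon hW1lt
  have hsq1 : W x1 ^ 2 < x1 ^ 4 := by nlinarith
  have hsq21 : W x2 ^ 2 < x1 ^ 4 := by nlinarith
  have hsq22 : W x2 ^ 2 < x2 ^ 4 := by nlinarith
  have hden1 : (0:ℝ) < x1 ^ 4 - W x1 ^ 2 := by linarith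
  have hden21 : (0:ℝ) < x1 ^ 4 - W x2 ^ 2 := by linarith
  have hden22 : (0:ℝ) < x2 ^ 4 - W x2 ^ 2 := by linarith
  have hpe : (0:ℝ) < p - 1 := by linarith
  -- ratio monotone in w
  have hr1 : (x1 ^ 4 + W x2 ^ 2) / (x1 ^ 4 - W x2 ^ 2)
      ≤ (x1 ^ 4 + W x1 ^ 2) / (x1 ^ 4 - W x1 ^ 2) := by
    rw [div_le_div_iff₀ hden21 hden1]
    nlinarith [mul_self_le_mul_self hW2pos.le hcon, pow_pos hx1 4]
  -- ratio strictly decreasing in x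
  have hr2 : (x2 ^ 4 + W x2 ^ 2) / (x2 ^ 4 - W x2 ^ 2)
      < (x1 ^ 4 + W x2 ^ 2) / (x1 ^ 4 - W x2 ^ 2) := by
    rw [div_lt_div_iff₀ hden22 hden21]
    have hx4 : x1 ^ 4 < x2 ^ 4 := pow_lt_pow_left₀ hlt hx1.le (by norm_num)
    nlinarith [sq_nonneg (W x2), mul_pos hW2pos hW2pos]
  have hb22 : (0:ℝ) ≤ (x2 ^ 4 + W x2 ^ 2) / (x2 ^ 4 - W x2 ^ 2) := by positivity
  have hb21 : (0:ℝ) ≤ (x1 ^ 4 + W x2 ^ 2) / (x1 ^ 4 - W x2 ^ 2) := by positivity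
  have hstep1 : ((x1 ^ 4 + W x2 ^ 2) / (x1 ^ 4 - W x2 ^ 2)) ^ (p - 1) * W x2
      ≤ ((x1 ^ 4 + W x1 ^ 2) / (x1 ^ 4 - W x1 ^ 2)) ^ (p - 1) * W x1 := by
    apply mul_le_mul (Real.rpow_le_rpow hb21 hr1 hpe.le) hcon hW2pos.le
    positivity
  have hstep2 : ((x2 ^ 4 + W x2 ^ 2) / (x2 ^ 4 - W x2 ^ 2)) ^ (p - 1) * W x2
      < ((x1 ^ 4 + W x2 ^ 2) / (x1 ^ 4 - W x2 ^ 2)) ^ (p - 1) * W x2 := by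
    exact mul_lt_mul_of_pos_right (Real.rpow_lt_rpow hb22 hr2 hpe) hW2pos
  have h1 := heq x1 hx1
  have h2 := heq x2 hx2
  linarith
end

section
/- Let p > 1 and k > 0 be real, let W : (0,∞) → ℝ satisfy 0 < W(x) < x² and ((x⁴+W(x)²)/(x⁴−W(x)²))^(p−1) · W(x) = k for all x > 0, and suppose W has derivative v at some point x₀ > 0 (HasDerivAt W v x₀). Then v · ( 4(p−1)·x₀⁴·W(x₀)/(x₀⁸ − W(x₀)⁴) + 1/W(x₀) ) = 8(p−1)·x₀³·W(x₀)²/(x₀⁸ − W(x₀)⁴); in particular v > 0. -/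
/-!
Taking logarithms, the level relation says that
`(p − 1)(log (x⁴ + W²) − log (x⁴ − W²)) + log W` is constant on `(0, ∞)`, hence has derivative
zero at `x₀`; the chain rule and clearing the denominators `x⁴ ± W²` give the identity. Both the
coefficient of `v` and the right-hand side are positive for `p > 1`, so `v > 0`.
-/

open Real Filter Topology

noncomputable def levelLog (q : ℝ) (W : ℝ → ℝ) (x : ℝ) : ℝ :=
  q * (log (x ^ 4 + W x ^ 2) - log (x ^ 4 - W x ^ 2)) + log (W x)

section

variable {q x w : ℝ}

lemma sq_lt_pow_four_of_pos_of_lt_sq (hw : 0 < w) (hlt : w < x ^ 2) : w ^ 2 < x ^ 4 := by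
  nlinarith

lemma pow_eight_sub_pow_four_pos (hw : 0 < w) (hlt : w < x ^ 2) : 0 < x ^ 8 - w ^ 4 := by
  have := sq_lt_pow_four_of_pos_of_lt_sq hw hlt
  nlinarith

lemma levelLog_eq_log {W : ℝ → ℝ} (hw : 0 < W x) (hlt : W x < x ^ 2) :
    levelLog q W x = log (((x ^ 4 + W x ^ 2) / (x ^ 4 - W x ^ 2)) ^ q * W x) := by
  have hsum : 0 < x ^ 4 + W x ^ 2 := by positivity
  have hdiff : 0 < x ^ 4 - W x ^ 2 := sub_pos.2 (sq_lt_pow_four_of_pos_of_lt_sq hw hlt)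
  rw [log_mul (by positivity) hw.ne', log_rpow (div_pos hsum hdiff), log_div hsum.ne' hdiff.ne',
    levelLog]

lemma hasDerivAt_levelLog {W : ℝ → ℝ} {v : ℝ} (hd : HasDerivAt W v x) (hw : 0 < W x)
    (hlt : W x < x ^ 2) :
    HasDerivAt (levelLog q W)
      (q * ((4 * x ^ 3 + 2 * W x * v) / (x ^ 4 + W x ^ 2)
        - (4 * x ^ 3 - 2 * W x * v) / (x ^ 4 - W x ^ 2)) + v / W x) x := by
  have hx4 : HasDerivAt (fun y : ℝ => y ^ 4) (4 * x ^ 3) x := by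
    simpa using hasDerivAt_pow 4 x
  have hW2 : HasDerivAt (fun y => W y ^ 2) (2 * W x * v) x := by
    simpa using hd.fun_pow 2
  have hsum : x ^ 4 + W x ^ 2 ≠ 0 := by positivity
  have hdiff : x ^ 4 - W x ^ 2 ≠ 0 := (sub_pos.2 (sq_lt_pow_four_of_pos_of_lt_sq hw hlt)).ne'
  exact ((((hx4.add hW2).log hsum).sub ((hx4.sub hW2).log hdiff)).const_mul q).add (hd.log hw.ne')

lemma mul_eq_of_levelLog_deriv_eq_zero {v : ℝ} (hw : 0 < w) (hlt : w < x ^ 2)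
    (h : q * ((4 * x ^ 3 + 2 * w * v) / (x ^ 4 + w ^ 2)
        - (4 * x ^ 3 - 2 * w * v) / (x ^ 4 - w ^ 2)) + v / w = 0) :
    v * (4 * q * x ^ 4 * w / (x ^ 8 - w ^ 4) + 1 / w) =
      8 * q * x ^ 3 * w ^ 2 / (x ^ 8 - w ^ 4) := by
  have hsum : x ^ 4 + w ^ 2 ≠ 0 := by positivity
  have hdiff : x ^ 4 - w ^ 2 ≠ 0 := (sub_pos.2 (sq_lt_pow_four_of_pos_of_lt_sq hw hlt)).ne'
  have hfactor : x ^ 8 - w ^ 4 = (x ^ 4 - w ^ 2) * (x ^ 4 + w ^ 2) := by ring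
  rw [hfactor]
  field_simp at h ⊢
  linear_combination h

end

theorem deriv_W_eq_general (p k : ℝ) (hp : 1 < p) (W : ℝ → ℝ)
    (hW : ∀ x > (0 : ℝ), 0 < W x ∧ W x < x ^ 2)
    (heq : ∀ x > (0 : ℝ), ((x ^ 4 + W x ^ 2) / (x ^ 4 - W x ^ 2)) ^ (p - 1) * W x = k)
    (x₀ v : ℝ) (hx₀ : 0 < x₀) (hd : HasDerivAt W v x₀) :
    v * (4 * (p - 1) * x₀ ^ 4 * W x₀ / (x₀ ^ 8 - W x₀ ^ 4) + 1 / W x₀) =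
      8 * (p - 1) * x₀ ^ 3 * W x₀ ^ 2 / (x₀ ^ 8 - W x₀ ^ 4) ∧ 0 < v := by
  obtain ⟨hW0, hWlt⟩ := hW x₀ hx₀
  have hconst : levelLog (p - 1) W =ᶠ[𝓝 x₀] fun _ => log k := by
    filter_upwards [Ioi_mem_nhds hx₀] with x hx
    rw [levelLog_eq_log (hW x hx).1 (hW x hx).2, heq x hx]
  have hzero := (hasDerivAt_levelLog hd hW0 hWlt).unique
    ((hasDerivAt_const x₀ (log k)).congr_of_eventuallyEq hconst)
  have hident := mul_eq_of_levelLog_deriv_eq_zero hW0 hWlt hzero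
  refine ⟨hident, ?_⟩
  have hden := pow_eight_sub_pow_four_pos hW0 hWlt
  have hq : 0 < p - 1 := sub_pos.2 hp
  have hcoeff : 0 < 4 * (p - 1) * x₀ ^ 4 * W x₀ / (x₀ ^ 8 - W x₀ ^ 4) + 1 / W x₀ := by positivity
  rw [← eq_div_iff hcoeff.ne'] at hident
  rw [hident]
  positivity

/-- For real `p > 1`, `k > 0`, if `W` satisfies `0 < W x < x²` and
`((x⁴ + W x²)/(x⁴ − W x²))^(p−1) · W x = k` for all `x > 0` (real power `Real.rpow`),
and `W` has derivative `v` at some `x₀ > 0`, then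
`v · (4(p−1)·x₀⁴·W x₀/(x₀⁸ − W x₀⁴) + 1/W x₀) = 8(p−1)·x₀³·W x₀²/(x₀⁸ − W x₀⁴)`;
in particular `v > 0`. -/
theorem deriv_W_eq (p k : ℝ) (hp : 1 < p) (hk : 0 < k) (W : ℝ → ℝ)
    (hW : ∀ x > (0 : ℝ), 0 < W x ∧ W x < x ^ 2)
    (heq : ∀ x > (0 : ℝ), ((x ^ 4 + W x ^ 2) / (x ^ 4 - W x ^ 2)) ^ (p - 1) * W x = k)
    (x₀ v : ℝ) (hx₀ : 0 < x₀) (hd : HasDerivAt W v x₀) :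
    v * (4 * (p - 1) * x₀ ^ 4 * W x₀ / (x₀ ^ 8 - W x₀ ^ 4) + 1 / W x₀) =
      8 * (p - 1) * x₀ ^ 3 * W x₀ ^ 2 / (x₀ ^ 8 - W x₀ ^ 4) ∧ 0 < v :=
  deriv_W_eq_general p k hp W hW heq x₀ v hx₀ hd
end

section
/- Let a, b, s, t, c be real with a, b, s, t > 0, (a − b)·(s²·b − t²·a) ≥ 0, −1 ≤ c ≤ 1, and t² + s² − 2stc > 0. Then (a²t² + b²s² − 2abstc)/(t² + s² − 2stc) ≤ (at + bs)²/(t + s)². -/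
/-- If `a, b, s, t > 0`, `(a − b)·(s²·b − t²·a) ≥ 0`, `−1 ≤ c ≤ 1` and
`t² + s² − 2stc > 0`, then
`(a²t² + b²s² − 2abstc)/(t² + s² − 2stc) ≤ (at + bs)²/(t + s)²`. -/
theorem F_max_at_pi (a b s t c : ℝ) (ha : 0 < a) (hb : 0 < b) (hs : 0 < s) (ht : 0 < t)
    (hsign : 0 ≤ (a - b) * (s ^ 2 * b - t ^ 2 * a)) (hc1 : -1 ≤ c) (hc2 : c ≤ 1)
    (hden : 0 < t ^ 2 + s ^ 2 - 2 * s * t * c) :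
    (a ^ 2 * t ^ 2 + b ^ 2 * s ^ 2 - 2 * a * b * s * t * c) /
        (t ^ 2 + s ^ 2 - 2 * s * t * c) ≤
      (a * t + b * s) ^ 2 / (t + s) ^ 2 := by
  rw [div_le_div_iff₀ hden (by positivity)]
  nlinarith [mul_nonneg (mul_nonneg hs.le ht.le) (mul_nonneg (by linarith : (0:ℝ) ≤ 1 + c) hsign), mul_pos hs ht, sq_nonneg (a - b), sq_nonneg (s*t)]
end

section
/- Let V : (0,∞) → ℝ be positive and antitone (nonincreasing) with x ↦ x²·V(x) monotone (nondecreasing) on (0,∞). Then for all nonzero ζ, ξ ∈ ℂ, |V(|ζ|)·ζ − V(|ξ|)·ξ| ≤ ((|ζ|·V(|ζ|) + |ξ|·V(|ξ|))/(|ζ| + |ξ|)) · |ζ − ξ|; in particular |V(|ζ|)·ζ − V(|ξ|)·ξ| ≤ max(V(|ζ|), V(|ξ|)) · |ζ − ξ|. -/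
/-!
Put `a = ‖ζ‖`, `b = ‖ξ‖`, `p = V a`, `q = V b` and `t = ⟪ζ, ξ⟫`. Expanding both norms,
`(ap + bq)² ‖ζ - ξ‖² - (a + b)² ‖pζ - qξ‖² = 2 (t + ab) (q - p) (a²p - b²q)`.
Cauchy–Schwarz gives `t + ab ≥ 0`, and since `V` is antitone while `x²V` is monotone,
`q - p` and `a²p - b²q` have the same sign. The bound by the maximum follows because
`(ap + bq) / (a + b)` is a weighted mean of `p` and `q`.
-/

section InnerProductSpace

variable {E : Type*} [NormedAddCommGroup E] [InnerProductSpace ℝ E]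

theorem norm_smul_sub_smul_sq_real (p q : ℝ) (x y : E) :
    ‖p • x - q • y‖ ^ 2 = p ^ 2 * ‖x‖ ^ 2 - 2 * (p * q) * inner ℝ x y + q ^ 2 * ‖y‖ ^ 2 := by
  rw [norm_sub_sq_real, norm_smul, norm_smul, inner_smul_left, inner_smul_right,
    Real.norm_eq_abs, Real.norm_eq_abs, mul_pow, mul_pow, sq_abs, sq_abs]
  simp only [conj_trivial]
  ring

theorem norm_smul_sub_smul_mul_le {p q : ℝ} {x y : E}
    (h : (q - p) * (‖y‖ ^ 2 * q - ‖x‖ ^ 2 * p) ≤ 0) :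
    ‖p • x - q • y‖ * (‖x‖ + ‖y‖) ≤ |‖x‖ * p + ‖y‖ * q| * ‖x - y‖ := by
  have hinner : 0 ≤ inner ℝ x y + ‖x‖ * ‖y‖ := by
    linarith [neg_le_of_abs_le (abs_real_inner_le_norm x y)]
  have hsq : (‖p • x - q • y‖ * (‖x‖ + ‖y‖)) ^ 2 ≤ (|‖x‖ * p + ‖y‖ * q| * ‖x - y‖) ^ 2 := by
    rw [mul_pow, mul_pow, sq_abs, norm_smul_sub_smul_sq_real, norm_sub_sq_real]
    linear_combination 2 * mul_nonneg hinner (neg_nonneg.mpr h)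
  exact (pow_le_pow_iff_left₀ (by positivity) (by positivity) two_ne_zero).mp hsq

end InnerProductSpace

theorem mul_add_mul_div_add_le_max {a b p q : ℝ} (ha : 0 ≤ a) (hb : 0 ≤ b) (hab : 0 < a + b) :
    (a * p + b * q) / (a + b) ≤ max p q := by
  rw [div_le_iff₀ hab]
  nlinarith [mul_le_mul_of_nonneg_left (le_max_left p q) ha,
    mul_le_mul_of_nonneg_left (le_max_right p q) hb]

/-- Ellipticity estimate (3.9): if `V : (0,∞) → ℝ` is positive and nonincreasing with
`x ↦ x²·V x` nondecreasing on `(0,∞)`, then for all nonzero `ζ, ξ ∈ ℂ`,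
`|V(|ζ|)·ζ − V(|ξ|)·ξ| ≤ ((|ζ|·V(|ζ|) + |ξ|·V(|ξ|))/(|ζ| + |ξ|)) · |ζ − ξ|`;
in particular `|V(|ζ|)·ζ − V(|ξ|)·ξ| ≤ max (V(|ζ|)) (V(|ξ|)) · |ζ − ξ|`. -/
theorem ellipticity_estimate (V : ℝ → ℝ)
    (hpos : ∀ x ∈ Set.Ioi (0 : ℝ), 0 < V x)
    (hanti : AntitoneOn V (Set.Ioi 0))
    (hmono : MonotoneOn (fun x => x ^ 2 * V x) (Set.Ioi 0))
    (ζ ξ : ℂ) (hζ : ζ ≠ 0) (hξ : ξ ≠ 0) :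
    ‖V (‖ζ‖) • ζ - V (‖ξ‖) • ξ‖ ≤
      ((‖ζ‖ * V (‖ζ‖) + ‖ξ‖ * V (‖ξ‖)) /
        (‖ζ‖ + ‖ξ‖)) * ‖ζ - ξ‖ ∧
    ‖V (‖ζ‖) • ζ - V (‖ξ‖) • ξ‖ ≤
      max (V (‖ζ‖)) (V (‖ξ‖)) * ‖ζ - ξ‖ := by
  have ha : ‖ζ‖ ∈ Set.Ioi 0 := norm_pos_iff.mpr hζ
  have hb : ‖ξ‖ ∈ Set.Ioi 0 := norm_pos_iff.mpr hξ
  have hab : 0 < ‖ζ‖ + ‖ξ‖ := add_pos ha hb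
  have hsign := (hanti.antivaryOn hmono).sub_mul_sub_nonpos ha hb
  have hmean : 0 ≤ ‖ζ‖ * V ‖ζ‖ + ‖ξ‖ * V ‖ξ‖ :=
    add_nonneg (mul_nonneg ha.le (hpos _ ha).le) (mul_nonneg hb.le (hpos _ hb).le)
  have hmul := norm_smul_sub_smul_mul_le (x := ζ) (y := ξ) hsign
  rw [abs_of_nonneg hmean] at hmul
  have hfirst : ‖V ‖ζ‖ • ζ - V ‖ξ‖ • ξ‖ ≤
      (‖ζ‖ * V ‖ζ‖ + ‖ξ‖ * V ‖ξ‖) / (‖ζ‖ + ‖ξ‖) * ‖ζ - ξ‖ := by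
    rw [div_mul_eq_mul_div, le_div_iff₀ hab]
    exact hmul
  exact ⟨hfirst, hfirst.trans (mul_le_mul_of_nonneg_right
    (mul_add_mul_div_add_le_max ha.le hb.le hab) (norm_nonneg _))⟩
end

section
/- Let p > 1 be real, Φ ∈ ℂ with Φ ≠ 0, and for i = 1, 2 let ζᵢ, ξᵢ ∈ ℂ satisfy 0 < |ξᵢ| < |ζᵢ| and ((|ζᵢ|²+|ξᵢ|²)/(|ζᵢ|²−|ξᵢ|²))^(p−1) · ζᵢ · conj(ξᵢ) = Φ. Then |ξ₁ − ξ₂| ≤ max(|ξ₁|/|ζ₁|, |ξ₂|/|ζ₂|) · |ζ₁ − ζ₂|. -/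
/-!
Writing `K = (|ζ|² + |ξ|²)/(|ζ|² − |ξ|²)` and `k = |ξ|/|ζ|`, the equation `K^(p−1) ζ conj ξ = Φ`
forces `ξ = k · (conj Φ/|Φ|) · ζ`, so `|ξ₁ − ξ₂| = |k₁ζ₁ − k₂ζ₂|`. Taking absolute values,
`K^(p−1) k |ζ|² = |Φ|`; as `K` increases with `k`, the larger of `k₁, k₂` (say `k₁`) has
`k₁|ζ₁|² ≤ k₂|ζ₂|²`, hence `2k₁|ζ₁| ≤ (k₁ + k₂)|ζ₂|` by AM–GM. Expanding the square shows that
this condition gives `|k₁ζ₁ − k₂ζ₂| ≤ k₁|ζ₁ − ζ₂|`.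
-/

open ComplexConjugate RealInnerProductSpace

theorem norm_smul_sub_smul_le {E : Type*} [NormedAddCommGroup E] [InnerProductSpace ℝ E]
    {x y : E} {a b : ℝ} (hb : 0 ≤ b) (hba : b ≤ a) (h : 2 * a * ‖x‖ ≤ (a + b) * ‖y‖) :
    ‖a • x - b • y‖ ≤ a * ‖x - y‖ := by
  have ha : 0 ≤ a := hb.trans hba
  have hab : 0 ≤ a - b := sub_nonneg.mpr hba
  have hinner : 2 * a * (a - b) * ⟪x, y⟫ ≤ 2 * a * (a - b) * (‖x‖ * ‖y‖) :=
    mul_le_mul_of_nonneg_left (real_inner_le_norm x y) (by positivity)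
  have hgeom : (a - b) * ‖y‖ * (2 * a * ‖x‖) ≤ (a - b) * ‖y‖ * ((a + b) * ‖y‖) :=
    mul_le_mul_of_nonneg_left h (by positivity)
  refine (pow_le_pow_iff_left₀ (norm_nonneg _) (by positivity) two_ne_zero).mp ?_
  rw [mul_pow, norm_sub_sq_real, norm_sub_sq_real, norm_smul, norm_smul, real_inner_smul_left,
    real_inner_smul_right, Real.norm_of_nonneg ha, Real.norm_of_nonneg hb]
  linear_combination hinner + hgeom

theorem two_mul_mul_le_add_mul_of_mul_sq_le {k₁ k₂ a₁ a₂ : ℝ} (hk₁ : 0 ≤ k₁) (hk₂ : 0 ≤ k₂)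
    (ha₁ : 0 ≤ a₁) (ha₂ : 0 ≤ a₂) (h : k₁ * a₁ ^ 2 ≤ k₂ * a₂ ^ 2) :
    2 * k₁ * a₁ ≤ (k₁ + k₂) * a₂ := by
  refine (pow_le_pow_iff_left₀ (by positivity) (by positivity) two_ne_zero).mp ?_
  calc (2 * k₁ * a₁) ^ 2 = 4 * k₁ * (k₁ * a₁ ^ 2) := by ring
    _ ≤ 4 * k₁ * (k₂ * a₂ ^ 2) := by gcongr
    _ ≤ ((k₁ + k₂) * a₂) ^ 2 := by nlinarith [sq_nonneg (k₁ - k₂), sq_nonneg a₂]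

/-- `K^(p−1)` for the distortion `K = (a² + b²)/(a² − b²)` of a map with `|u_w| = a`,
`|u_w̄| = b`. -/
noncomputable def distortionPow (p a b : ℝ) : ℝ := ((a ^ 2 + b ^ 2) / (a ^ 2 - b ^ 2)) ^ (p - 1)

theorem distortionPow_pos {p a b : ℝ} (hba : |b| < a) : 0 < distortionPow p a b := by
  have ha : 0 < a := (abs_nonneg b).trans_lt hba
  have hsq : b ^ 2 < a ^ 2 := sq_lt_sq' (abs_lt.mp hba).1 (abs_lt.mp hba).2
  unfold distortionPow
  exact Real.rpow_pos_of_pos (div_pos (by positivity) (sub_pos.mpr hsq)) _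

theorem distortionPow_le_distortionPow {p a₁ b₁ a₂ b₂ : ℝ} (hp : 1 ≤ p) (hb₁ : 0 ≤ b₁)
    (hb₂ : 0 ≤ b₂) (h₁ : b₁ < a₁) (h₂ : b₂ < a₂) (h : b₂ * a₁ ≤ b₁ * a₂) :
    distortionPow p a₂ b₂ ≤ distortionPow p a₁ b₁ := by
  have hd₁ : 0 < a₁ ^ 2 - b₁ ^ 2 := by nlinarith
  have hd₂ : 0 < a₂ ^ 2 - b₂ ^ 2 := by nlinarith
  have hsq : (b₂ * a₁) ^ 2 ≤ (b₁ * a₂) ^ 2 := pow_le_pow_left₀ (mul_nonneg hb₂ (hb₁.trans h₁.le)) h 2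
  refine Real.rpow_le_rpow (div_nonneg (by positivity) hd₂.le) ?_ (sub_nonneg.mpr hp)
  rw [div_le_div_iff₀ hd₂ hd₁]
  linear_combination 2 * hsq

section AhlforsHopf

variable {c : ℝ} {ζ ξ Φ : ℂ}

theorem norm_mul_norm_eq_of_ofReal_mul_mul_conj_eq (hc : 0 ≤ c) (h : c * ζ * conj ξ = Φ) :
    c * (‖ζ‖ * ‖ξ‖) = ‖Φ‖ := by
  rw [← h, norm_mul, norm_mul, Complex.norm_real, Real.norm_of_nonneg hc, Complex.norm_conj,
    mul_assoc]

/-- The solution `ξ` is `|ξ|/|ζ|` times the unit `conj Φ/|Φ|` times `ζ`, with denominators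
cleared. -/
theorem norm_mul_norm_mul_eq_of_ofReal_mul_mul_conj_eq (hc : 0 ≤ c)
    (h : c * ζ * conj ξ = Φ) : ((‖Φ‖ * ‖ζ‖ : ℝ) : ℂ) * ξ = ‖ξ‖ * conj Φ * ζ := by
  have hconj : (c : ℂ) * conj ζ * ξ = conj Φ := by
    simpa only [map_mul, Complex.conj_ofReal, Complex.conj_conj] using congrArg conj h
  have hζ : ζ * conj ζ = ((‖ζ‖ ^ 2 : ℝ) : ℂ) := by
    rw [Complex.mul_conj, Complex.normSq_eq_norm_sq]
  rw [← hconj, ← norm_mul_norm_eq_of_ofReal_mul_mul_conj_eq hc h]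
  linear_combination (norm := (push_cast; ring1)) (-(c * ‖ξ‖ * ξ) : ℂ) * hζ

theorem norm_sub_eq_norm_smul_sub_smul {c₁ c₂ : ℝ} {ζ₁ ξ₁ ζ₂ ξ₂ : ℂ} (hc₁ : 0 ≤ c₁)
    (hc₂ : 0 ≤ c₂) (hΦ : Φ ≠ 0) (hζ₁ : ζ₁ ≠ 0) (hζ₂ : ζ₂ ≠ 0)
    (h₁ : c₁ * ζ₁ * conj ξ₁ = Φ) (h₂ : c₂ * ζ₂ * conj ξ₂ = Φ) :
    ‖ξ₁ - ξ₂‖ = ‖(‖ξ₁‖ / ‖ζ₁‖) • ζ₁ - (‖ξ₂‖ / ‖ζ₂‖) • ζ₂‖ := by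
  have hΦ' : 0 < ‖Φ‖ := norm_pos_iff.mpr hΦ
  have e₁ := norm_mul_norm_mul_eq_of_ofReal_mul_mul_conj_eq hc₁ h₁
  have e₂ := norm_mul_norm_mul_eq_of_ofReal_mul_mul_conj_eq hc₂ h₂
  have hζ₁' : (‖ζ₁‖ : ℂ) ≠ 0 := Complex.ofReal_ne_zero.mpr (norm_ne_zero_iff.mpr hζ₁)
  have hζ₂' : (‖ζ₂‖ : ℂ) ≠ 0 := Complex.ofReal_ne_zero.mpr (norm_ne_zero_iff.mpr hζ₂)
  have key : (‖Φ‖ : ℂ) * (ξ₁ - ξ₂) =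
      conj Φ * ((‖ξ₁‖ / ‖ζ₁‖) • ζ₁ - (‖ξ₂‖ / ‖ζ₂‖) • ζ₂) := by
    simp only [Complex.real_smul]
    push_cast at e₁ e₂ ⊢
    field_simp
    linear_combination ‖ζ₂‖ * e₁ - ‖ζ₁‖ * e₂
  have := congrArg norm key
  rw [norm_mul, norm_mul, Complex.norm_conj, Complex.norm_real, Real.norm_of_nonneg hΦ'.le]
    at this
  exact mul_left_cancel₀ hΦ'.ne' this

end AhlforsHopf

theorem norm_sub_le_of_ratio_le {p : ℝ} (hp : 1 ≤ p) {Φ ζ₁ ξ₁ ζ₂ ξ₂ : ℂ} (hΦ : Φ ≠ 0)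
    (h₁ : ‖ξ₁‖ < ‖ζ₁‖) (h₂ : ‖ξ₂‖ < ‖ζ₂‖)
    (heq₁ : (distortionPow p ‖ζ₁‖ ‖ξ₁‖ : ℂ) * ζ₁ * conj ξ₁ = Φ)
    (heq₂ : (distortionPow p ‖ζ₂‖ ‖ξ₂‖ : ℂ) * ζ₂ * conj ξ₂ = Φ)
    (hratio : ‖ξ₂‖ * ‖ζ₁‖ ≤ ‖ξ₁‖ * ‖ζ₂‖) :
    ‖ξ₁ - ξ₂‖ ≤ ‖ξ₁‖ / ‖ζ₁‖ * ‖ζ₁ - ζ₂‖ := by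
  have ha₁ : 0 < ‖ζ₁‖ := (norm_nonneg _).trans_lt h₁
  have ha₂ : 0 < ‖ζ₂‖ := (norm_nonneg _).trans_lt h₂
  have hF₁ := distortionPow_pos (p := p) ((abs_norm ξ₁).trans_lt h₁)
  have hF₂ := distortionPow_pos (p := p) ((abs_norm ξ₂).trans_lt h₂)
  have hk : ‖ξ₂‖ / ‖ζ₂‖ ≤ ‖ξ₁‖ / ‖ζ₁‖ := (div_le_div_iff₀ ha₂ ha₁).mpr hratio
  have hF := distortionPow_le_distortionPow hp (norm_nonneg _) (norm_nonneg _) h₁ h₂ hratio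
  have hnorm₁ := norm_mul_norm_eq_of_ofReal_mul_mul_conj_eq hF₁.le heq₁
  have hnorm₂ := norm_mul_norm_eq_of_ofReal_mul_mul_conj_eq hF₂.le heq₂
  have hprod : ‖ζ₁‖ * ‖ξ₁‖ ≤ ‖ζ₂‖ * ‖ξ₂‖ := by
    refine le_of_mul_le_mul_left ?_ hF₂
    calc distortionPow p ‖ζ₂‖ ‖ξ₂‖ * (‖ζ₁‖ * ‖ξ₁‖)
        ≤ distortionPow p ‖ζ₁‖ ‖ξ₁‖ * (‖ζ₁‖ * ‖ξ₁‖) := by gcongr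
      _ = distortionPow p ‖ζ₂‖ ‖ξ₂‖ * (‖ζ₂‖ * ‖ξ₂‖) := hnorm₁.trans hnorm₂.symm
  have hsq : ‖ξ₁‖ / ‖ζ₁‖ * ‖ζ₁‖ ^ 2 ≤ ‖ξ₂‖ / ‖ζ₂‖ * ‖ζ₂‖ ^ 2 := by
    field_simp
    linarith
  rw [norm_sub_eq_norm_smul_sub_smul hF₁.le hF₂.le hΦ (norm_pos_iff.mp ha₁)
    (norm_pos_iff.mp ha₂) heq₁ heq₂]
  exact norm_smul_sub_smul_le (by positivity) hk
    (two_mul_mul_le_add_mul_of_mul_sq_le (by positivity) (by positivity) ha₁.le ha₂.le hsq)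

theorem beltrami_difference_estimate_general (p : ℝ) (hp : 1 < p) (Φ : ℂ) (hΦ : Φ ≠ 0)
    (ζ₁ ξ₁ ζ₂ ξ₂ : ℂ)
    (h11 : ‖ξ₁‖ < ‖ζ₁‖)
    (h12 : ‖ξ₂‖ < ‖ζ₂‖)
    (heq1 : ((((‖ζ₁‖ ^ 2 + ‖ξ₁‖ ^ 2) /
        (‖ζ₁‖ ^ 2 - ‖ξ₁‖ ^ 2)) ^ (p - 1) : ℝ) : ℂ) *
        ζ₁ * (starRingEnd ℂ) ξ₁ = Φ)
    (heq2 : ((((‖ζ₂‖ ^ 2 + ‖ξ₂‖ ^ 2) /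
        (‖ζ₂‖ ^ 2 - ‖ξ₂‖ ^ 2)) ^ (p - 1) : ℝ) : ℂ) *
        ζ₂ * (starRingEnd ℂ) ξ₂ = Φ) :
    ‖ξ₁ - ξ₂‖ ≤
      max (‖ξ₁‖ / ‖ζ₁‖) (‖ξ₂‖ / ‖ζ₂‖) *
        ‖ζ₁ - ζ₂‖ := by
  rcases le_total (‖ξ₂‖ * ‖ζ₁‖) (‖ξ₁‖ * ‖ζ₂‖) with h | h
  · calc ‖ξ₁ - ξ₂‖ ≤ ‖ξ₁‖ / ‖ζ₁‖ * ‖ζ₁ - ζ₂‖ :=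
          norm_sub_le_of_ratio_le hp.le hΦ h11 h12 heq1 heq2 h
      _ ≤ _ := by gcongr; exact le_max_left _ _
  · calc ‖ξ₁ - ξ₂‖ ≤ ‖ξ₂‖ / ‖ζ₂‖ * ‖ζ₁ - ζ₂‖ := by
          rw [norm_sub_rev ξ₁, norm_sub_rev ζ₁]
          exact norm_sub_le_of_ratio_le hp.le hΦ h12 h11 heq2 heq1 h
      _ ≤ _ := by gcongr; exact le_max_right _ _

/-- Pointwise content of Lemma 7: for real `p > 1` and `Φ ≠ 0`, if for `i = 1, 2`
the pairs `ζᵢ, ξᵢ ∈ ℂ` satisfy `0 < |ξᵢ| < |ζᵢ|` and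
`((|ζᵢ|² + |ξᵢ|²)/(|ζᵢ|² − |ξᵢ|²))^(p−1) · ζᵢ · conj ξᵢ = Φ` (real power `Real.rpow`),
then `|ξ₁ − ξ₂| ≤ max (|ξ₁|/|ζ₁|) (|ξ₂|/|ζ₂|) · |ζ₁ − ζ₂|`. -/
theorem beltrami_difference_estimate (p : ℝ) (hp : 1 < p) (Φ : ℂ) (hΦ : Φ ≠ 0)
    (ζ₁ ξ₁ ζ₂ ξ₂ : ℂ)
    (h01 : 0 < ‖ξ₁‖) (h11 : ‖ξ₁‖ < ‖ζ₁‖)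
    (h02 : 0 < ‖ξ₂‖) (h12 : ‖ξ₂‖ < ‖ζ₂‖)
    (heq1 : ((((‖ζ₁‖ ^ 2 + ‖ξ₁‖ ^ 2) /
        (‖ζ₁‖ ^ 2 - ‖ξ₁‖ ^ 2)) ^ (p - 1) : ℝ) : ℂ) *
        ζ₁ * (starRingEnd ℂ) ξ₁ = Φ)
    (heq2 : ((((‖ζ₂‖ ^ 2 + ‖ξ₂‖ ^ 2) /
        (‖ζ₂‖ ^ 2 - ‖ξ₂‖ ^ 2)) ^ (p - 1) : ℝ) : ℂ) *
        ζ₂ * (starRingEnd ℂ) ξ₂ = Φ) :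
    ‖ξ₁ - ξ₂‖ ≤
      max (‖ξ₁‖ / ‖ζ₁‖) (‖ξ₂‖ / ‖ζ₂‖) *
        ‖ζ₁ - ζ₂‖ :=
  beltrami_difference_estimate_general p hp Φ hΦ ζ₁ ξ₁ ζ₂ ξ₂ h11 h12 heq1 heq2
end

section
/- Let h : ℂ → ℂ be continuously differentiable, mapping the open unit disc 𝔻 bijectively onto 𝔻 with everywhere positive Jacobian on 𝔻, and let f : ℂ → ℂ be continuously differentiable with f(h(w)) = w for all w ∈ 𝔻. For a map u differentiable at a point z define u_z := ((fderiv ℝ u z) 1 − Complex.I • (fderiv ℝ u z) Complex.I)/2, u_z̄ := ((fderiv ℝ u z) 1 + Complex.I • (fderiv ℝ u z) Complex.I)/2, J(z,u) := |u_z|² − |u_z̄|², and 𝕂(z,u) := (|u_z|² + |u_z̄|²)/(|u_z|² − |u_z̄|²). Let A : ℝ → ℝ be continuous and nonnegative, and assume z ↦ A(𝕂(z,f)) is integrable on 𝔻. Then w ↦ A(𝕂(w,h))·J(w,h) is integrable on 𝔻 and ∫_𝔻 A(𝕂(w,h))·J(w,h) dw = ∫_𝔻 A(𝕂(z,f)) dz.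 -/
open MeasureTheory

/-- The Wirtinger derivative `u_z` of `u : ℂ → ℂ` at `z`. -/
noncomputable def wirtingerDz (u : ℂ → ℂ) (z : ℂ) : ℂ :=
  ((fderiv ℝ u z) 1 - Complex.I • (fderiv ℝ u z) Complex.I) / 2

/-- The Wirtinger derivative `u_z̄` of `u : ℂ → ℂ` at `z`. -/
noncomputable def wirtingerDzbar (u : ℂ → ℂ) (z : ℂ) : ℂ :=
  ((fderiv ℝ u z) 1 + Complex.I • (fderiv ℝ u z) Complex.I) / 2

/-- The Jacobian determinant `J(z,u) = |u_z|² − |u_z̄|²`. -/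
noncomputable def jacobianDet (u : ℂ → ℂ) (z : ℂ) : ℝ :=
  ‖wirtingerDz u z‖ ^ 2 - ‖wirtingerDzbar u z‖ ^ 2

/-- The distortion functional `𝕂(z,u) = (|u_z|² + |u_z̄|²)/(|u_z|² − |u_z̄|²)`. -/
noncomputable def distortionK (u : ℂ → ℂ) (z : ℂ) : ℝ :=
  (‖wirtingerDz u z‖ ^ 2 + ‖wirtingerDzbar u z‖ ^ 2) /
    (‖wirtingerDz u z‖ ^ 2 - ‖wirtingerDzbar u z‖ ^ 2)

/-! Writing `dh = p dz + q dz̄`, the inverse differential `df` at `h w` is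
`(p̄ dz - q dz̄) / (|p|² - |q|²)`, so `|f_z|` and `|f_z̄|` are `|p|` and `|q|` divided by the same
factor, and `𝕂(h w, f) = 𝕂(w, h)`. The identity is then the change of variables `z = h w`, whose
Jacobian `J(w, h) = |p|² - |q|²` is positive. -/

open ComplexConjugate

namespace ContinuousLinearMap

noncomputable def dz (L : ℂ →L[ℝ] ℂ) : ℂ := (L 1 - Complex.I • L Complex.I) / 2

noncomputable def dzbar (L : ℂ →L[ℝ] ℂ) : ℂ := (L 1 + Complex.I • L Complex.I) / 2

noncomputable def distortion (L : ℂ →L[ℝ] ℂ) : ℝ :=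
  (‖L.dz‖ ^ 2 + ‖L.dzbar‖ ^ 2) / (‖L.dz‖ ^ 2 - ‖L.dzbar‖ ^ 2)

variable (L : ℂ →L[ℝ] ℂ)

theorem apply_eq_dz_mul_add_dzbar_mul_conj (v : ℂ) :
    L v = L.dz * v + L.dzbar * conj v := by
  have hv : v = v.re • (1 : ℂ) + v.im • Complex.I := by
    simp [Complex.real_smul, Complex.re_add_im]
  rw [hv, map_add, L.map_smul, L.map_smul, dz, dzbar]
  simp only [Complex.real_smul, smul_eq_mul, map_add, map_mul, Complex.conj_ofReal,
    Complex.conj_I, mul_one]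
  linear_combination (L Complex.I * v.im) * Complex.I_sq

theorem det_eq_norm_dz_sq_sub_norm_dzbar_sq : L.det = ‖L.dz‖ ^ 2 - ‖L.dzbar‖ ^ 2 := by
  have half_sq (x : ℂ) : ‖x / 2‖ ^ 2 = (x.re ^ 2 + x.im ^ 2) / 4 := by
    rw [norm_div, Complex.norm_two, div_pow, Complex.sq_norm, Complex.normSq_apply]
    ring
  rw [ContinuousLinearMap.det, ← LinearMap.det_toMatrix Complex.basisOneI, Matrix.det_fin_two,
    dz, dzbar, half_sq, half_sq]
  simp only [LinearMap.toMatrix_apply, ContinuousLinearMap.coe_coe, Complex.coe_basisOneI_repr,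
    Complex.coe_basisOneI, Matrix.cons_val_zero, Matrix.cons_val_one, smul_eq_mul,
    Complex.sub_re, Complex.sub_im, Complex.add_re, Complex.add_im, Complex.mul_re,
    Complex.mul_im, Complex.I_re, Complex.I_im]
  ring

variable {L} {M : ℂ →L[ℝ] ℂ}

theorem det_ne_zero_of_comp_eq_id (hML : M.comp L = .id ℝ ℂ) : L.det ≠ 0 := by
  have h : LinearMap.det ((M : ℂ →ₗ[ℝ] ℂ) ∘ₗ L) = LinearMap.det LinearMap.id :=
    congrArg (fun T : ℂ →L[ℝ] ℂ => LinearMap.det (T : ℂ →ₗ[ℝ] ℂ)) hML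
  rw [LinearMap.det_comp, LinearMap.det_id] at h
  exact right_ne_zero_of_mul_eq_one h

theorem apply_eq_of_comp_eq_id (hML : M.comp L = .id ℝ ℂ) (u : ℂ) :
    M u = (conj L.dz * u - L.dzbar * conj u) / L.det := by
  have hdet : (L.det : ℂ) = L.dz * conj L.dz - L.dzbar * conj L.dzbar := by
    rw [Complex.mul_conj, Complex.mul_conj, L.det_eq_norm_dz_sq_sub_norm_dzbar_sq,
      Complex.normSq_eq_norm_sq, Complex.normSq_eq_norm_sq]
    push_cast; ring
  have hdet0 : (L.det : ℂ) ≠ 0 := mod_cast det_ne_zero_of_comp_eq_id hML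
  set v := (conj L.dz * u - L.dzbar * conj u) / L.det
  have hLv : L v = u := by
    rw [L.apply_eq_dz_mul_add_dzbar_mul_conj]
    simp only [v, map_div₀, map_sub, map_mul, Complex.conj_conj, Complex.conj_ofReal]
    field_simp
    linear_combination -u * hdet
  rw [← hLv, ← ContinuousLinearMap.comp_apply, hML, ContinuousLinearMap.id_apply]

theorem dz_dzbar_of_comp_eq_id (hML : M.comp L = .id ℝ ℂ) :
    M.dz = conj L.dz / L.det ∧ M.dzbar = -L.dzbar / L.det := by
  have hdet0 : (L.det : ℂ) ≠ 0 := mod_cast det_ne_zero_of_comp_eq_id hML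
  change (M 1 - Complex.I * M Complex.I) / 2 = _ ∧ (M 1 + Complex.I * M Complex.I) / 2 = _
  simp only [apply_eq_of_comp_eq_id hML, map_one, Complex.conj_I]
  constructor <;> field_simp
  · linear_combination -(L.dzbar + conj L.dz) * Complex.I_sq
  · linear_combination (L.dzbar + conj L.dz) * Complex.I_sq

theorem distortion_eq_of_comp_eq_id (hML : M.comp L = .id ℝ ℂ) :
    M.distortion = L.distortion := by
  have hdet0 : L.det ^ 2 ≠ 0 := pow_ne_zero 2 (det_ne_zero_of_comp_eq_id hML)
  have norm_div_det_sq (x : ℂ) : ‖x / L.det‖ ^ 2 = ‖x‖ ^ 2 / L.det ^ 2 := by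
    rw [norm_div, div_pow, Complex.norm_real, Real.norm_eq_abs, sq_abs]
  obtain ⟨hdz, hdzbar⟩ := dz_dzbar_of_comp_eq_id hML
  rw [distortion, distortion, hdz, hdzbar, norm_div_det_sq, norm_div_det_sq, Complex.norm_conj,
    norm_neg, ← add_div, ← sub_div, div_div_div_cancel_right₀ hdet0]

end ContinuousLinearMap

theorem fderiv_comp_fderiv_eq_id_of_leftInvOn {E F : Type*} [NormedAddCommGroup E]
    [NormedSpace ℝ E] [NormedAddCommGroup F] [NormedSpace ℝ F] {f : F → E} {h : E → F}
    {s : Set E} {w : E} (hs : IsOpen s) (hw : w ∈ s) (hinv : Set.LeftInvOn f h s)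
    (hf : DifferentiableAt ℝ f (h w)) (hh : DifferentiableAt ℝ h w) :
    (fderiv ℝ f (h w)).comp (fderiv ℝ h w) = .id ℝ E := by
  rw [← fderiv_comp w hf hh, ← fderiv_id]
  exact Filter.EventuallyEq.fderiv_eq (Filter.eventuallyEq_of_mem (hs.mem_nhds hw) hinv)

theorem jacobianDet_eq_det_fderiv (u : ℂ → ℂ) (z : ℂ) : jacobianDet u z = (fderiv ℝ u z).det :=
  (fderiv ℝ u z).det_eq_norm_dz_sq_sub_norm_dzbar_sq.symm

theorem distortionK_eq_distortion_fderiv (u : ℂ → ℂ) (z : ℂ) :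
    distortionK u z = (fderiv ℝ u z).distortion :=
  rfl

theorem distortionK_apply_eq_of_leftInvOn {f h : ℂ → ℂ} {s : Set ℂ} {w : ℂ} (hs : IsOpen s)
    (hw : w ∈ s) (hinv : Set.LeftInvOn f h s) (hf : DifferentiableAt ℝ f (h w))
    (hh : DifferentiableAt ℝ h w) : distortionK f (h w) = distortionK h w := by
  rw [distortionK_eq_distortion_fderiv, distortionK_eq_distortion_fderiv]
  exact ContinuousLinearMap.distortion_eq_of_comp_eq_id <|
    fderiv_comp_fderiv_eq_id_of_leftInvOn hs hw hinv hf hh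

theorem energy_duality_general (h f : ℂ → ℂ) (A : ℝ → ℝ)
    (hh : ContDiff ℝ 1 h) (hf : ContDiff ℝ 1 f)
    (hbij : Set.BijOn h (Metric.ball (0 : ℂ) 1) (Metric.ball (0 : ℂ) 1))
    (hJ : ∀ w ∈ Metric.ball (0 : ℂ) 1, 0 < jacobianDet h w)
    (hinv : ∀ w ∈ Metric.ball (0 : ℂ) 1, f (h w) = w)
    (hint : IntegrableOn (fun z => A (distortionK f z)) (Metric.ball (0 : ℂ) 1) volume) :
    IntegrableOn (fun w => A (distortionK h w) * jacobianDet h w)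
      (Metric.ball (0 : ℂ) 1) volume ∧
    ∫ w in Metric.ball (0 : ℂ) 1, A (distortionK h w) * jacobianDet h w =
      ∫ z in Metric.ball (0 : ℂ) 1, A (distortionK f z) := by
  set D := Metric.ball (0 : ℂ) 1
  have hD : MeasurableSet D := measurableSet_ball
  have hderiv (w : ℂ) (_ : w ∈ D) : HasFDerivWithinAt h (fderiv ℝ h w) D w :=
    (hh.differentiable one_ne_zero w).hasFDerivAt.hasFDerivWithinAt
  have hintegrand : Set.EqOn (fun w => |(fderiv ℝ h w).det| • A (distortionK f (h w)))
      (fun w => A (distortionK h w) * jacobianDet h w) D := by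
    intro w hw
    dsimp only
    rw [smul_eq_mul, ← jacobianDet_eq_det_fderiv, abs_of_pos (hJ w hw), mul_comm,
      distortionK_apply_eq_of_leftInvOn Metric.isOpen_ball hw hinv
        (hf.differentiable one_ne_zero _) (hh.differentiable one_ne_zero w)]
  rw [← hbij.image_eq] at hint
  refine ⟨((integrableOn_image_iff_integrableOn_abs_det_fderiv_smul volume hD hderiv
    hbij.injOn _).mp hint).congr_fun hintegrand hD, ?_⟩
  rw [← setIntegral_congr_fun hD hintegrand, ← integral_image_eq_integral_abs_det_fderiv_smul
    volume hD hderiv hbij.injOn (fun z => A (distortionK f z)), hbij.image_eq]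

/-- Duality of energies `E*_A(h) = E_A(f)`: if `h` is a `C¹` map taking the unit disc
`𝔻` bijectively onto itself with positive Jacobian on `𝔻`, `f` is `C¹` with
`f ∘ h = id` on `𝔻`, `A : ℝ → ℝ` is continuous and nonnegative, and
`z ↦ A(𝕂(z,f))` is integrable on `𝔻`, then `w ↦ A(𝕂(w,h))·J(w,h)` is integrable
on `𝔻` and `∫_𝔻 A(𝕂(w,h))·J(w,h) dw = ∫_𝔻 A(𝕂(z,f)) dz`. -/
theorem energy_duality (h f : ℂ → ℂ) (A : ℝ → ℝ)
    (hh : ContDiff ℝ 1 h) (hf : ContDiff ℝ 1 f)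
    (hbij : Set.BijOn h (Metric.ball (0 : ℂ) 1) (Metric.ball (0 : ℂ) 1))
    (hJ : ∀ w ∈ Metric.ball (0 : ℂ) 1, 0 < jacobianDet h w)
    (hinv : ∀ w ∈ Metric.ball (0 : ℂ) 1, f (h w) = w)
    (hAcont : Continuous A) (hAnonneg : ∀ t : ℝ, 0 ≤ A t)
    (hint : IntegrableOn (fun z => A (distortionK f z)) (Metric.ball (0 : ℂ) 1) volume) :
    IntegrableOn (fun w => A (distortionK h w) * jacobianDet h w)
      (Metric.ball (0 : ℂ) 1) volume ∧
    ∫ w in Metric.ball (0 : ℂ) 1, A (distortionK h w) * jacobianDet h w =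
      ∫ z in Metric.ball (0 : ℂ) 1, A (distortionK f z) :=
  energy_duality_general h f A hh hf hbij hJ hinv hint
end
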